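/- arXiv:1611.03929 — 3 statements merged into one kernel-verified Lean document; each statement's English description precedes it below -/
import Mathlib

section
/- Let A be a unital C*-algebra, H a Hilbert space, Φ : A → B(H) a unital *-homomorphism, and Ψ : A → B(H) a completely positive map such that Φ − Ψ is also completely positive. Then there exists a unique operator z in the commutant of Φ(A) with 0 ≤ z ≤ 1 such that Ψ(x) = z·Φ(x) for all x ∈ A. -/
open ComplexOrder

/-- A linear map into `B(H)` is completely positive if for every `k`, every
`a : Fin k → A` and `ξ : Fin k → H`, the matrix positivity condition
`0 ≤ ∑ i j, ⟪Ψ(aᵢ* aⱼ) ξⱼ, ξᵢ⟫` holds. -/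
def IsCompletelyPositive
    {A : Type*} [NormedRing A] [StarRing A] [NormedAlgebra ℂ A]
    {H : Type*} [NormedAddCommGroup H] [InnerProductSpace ℂ H] [CompleteSpace H]
    (Ψ : A →ₗ[ℂ] (H →L[ℂ] H)) : Prop :=
  ∀ (k : ℕ) (a : Fin k → A) (ξ : Fin k → H),
    0 ≤ ∑ i, ∑ j, (inner ℂ ((Ψ (star (a i) * a j)) (ξ j)) (ξ i) : ℂ)

/-!
For a unital *-homomorphism `Φ`, the vectors `a = (x, 1)`, `v = (ξ, -Φ x ξ)` give
`∑ ⟪Φ(aᵢ* aⱼ) vⱼ, vᵢ⟫ = ‖Φ x ξ - Φ x ξ‖² = 0`. As both `Ψ` and `Φ - Ψ` are completely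
positive, the same sum for `Ψ` vanishes too, and Cauchy–Schwarz for the positive form defined by `Ψ` makes this
null vector orthogonal to `(1, η)`. Written out, that says `Ψ x = Ψ 1 * Φ x` and
`Ψ x = Φ x * Ψ 1`, so `z = Ψ 1` works; it is the only choice because `Φ 1 = 1`.
-/

open ComplexConjugate

theorem Complex.eq_zero_of_forall_real_nonneg {w D : ℂ}
    (h : ∀ s : ℝ, 0 ≤ (s : ℂ) * w + (s : ℂ) ^ 2 * D) : w = 0 := by
  have hre : ∀ s : ℝ, 0 ≤ D.re * (s * s) + w.re * s + 0 := fun s => by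
    have := (Complex.le_def.mp (h s)).1
    simp only [← Complex.ofReal_pow, Complex.zero_re, Complex.add_re, Complex.re_ofReal_mul] at this
    linarith
  have him : ∀ s : ℝ, 0 = s * w.im + s ^ 2 * D.im := fun s => by
    simpa only [← Complex.ofReal_pow, Complex.zero_im, Complex.add_im, Complex.im_ofReal_mul]
      using (Complex.le_def.mp (h s)).2
  have hwre : w.re = 0 := by
    have := discrim_le_zero hre
    rw [discrim] at this
    nlinarith
  have hwim : w.im = 0 := by linarith [him 1, him (-1)]
  exact Complex.ext hwre hwim

-- Taking `t` real and then purely imaginary isolates `X + Y` and `X - Y`.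
theorem Complex.eq_zero_of_forall_nonneg {X Y D : ℂ}
    (h : ∀ t : ℂ, 0 ≤ conj t * X + t * Y + conj t * t * D) : X = 0 ∧ Y = 0 := by
  have hsum : X + Y = 0 := Complex.eq_zero_of_forall_real_nonneg (D := D) fun s => by
    convert h s using 1
    simp only [Complex.conj_ofReal]
    ring
  have hdiff : Complex.I * (Y - X) = 0 :=
    Complex.eq_zero_of_forall_real_nonneg (D := D) fun s => by
      convert h (s * Complex.I) using 1
      simp only [map_mul, Complex.conj_ofReal, Complex.conj_I]
      ring_nf
      simp only [Complex.I_sq]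
      ring
  have hdiff' : Y - X = 0 := (mul_eq_zero.mp hdiff).resolve_left Complex.I_ne_zero
  constructor
  · linear_combination (hsum - hdiff') / 2
  · linear_combination (hsum + hdiff') / 2

theorem ContinuousLinearMap.nonneg_of_forall_inner_nonneg {H : Type*} [NormedAddCommGroup H]
    [InnerProductSpace ℂ H] {T : H →L[ℂ] H} (hT : ∀ x, 0 ≤ inner ℂ (T x) x) : 0 ≤ T := by
  rw [nonneg_iff_isPositive, isPositive_iff_complex]
  intro x
  obtain ⟨hre, him⟩ := Complex.le_def.mp (hT x)
  exact ⟨Complex.ext (by simp) (by simp [← him]), hre⟩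

section

variable {A : Type*} [NormedRing A] [StarRing A] [NormedAlgebra ℂ A]
  {H : Type*} [NormedAddCommGroup H] [InnerProductSpace ℂ H]

noncomputable def cpSum (Ψ : A →ₗ[ℂ] (H →L[ℂ] H)) {k : ℕ} (a : Fin k → A) (ξ : Fin k → H) : ℂ :=
  ∑ i, ∑ j, inner ℂ (Ψ (star (a i) * a j) (ξ j)) (ξ i)

lemma cpSum_sub (Φ Ψ : A →ₗ[ℂ] (H →L[ℂ] H)) {k : ℕ} (a : Fin k → A) (ξ : Fin k → H) :
    cpSum (Φ - Ψ) a ξ = cpSum Φ a ξ - cpSum Ψ a ξ := by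
  simp only [cpSum, LinearMap.sub_apply, sub_apply, inner_sub_left, Finset.sum_sub_distrib]

lemma cpSum_snoc (Ψ : A →ₗ[ℂ] (H →L[ℂ] H)) {k : ℕ} (a : Fin k → A) (b : A)
    (ξ : Fin k → H) (η : H) :
    cpSum Ψ (Fin.snoc a b) (Fin.snoc ξ η) = cpSum Ψ a ξ
      + ∑ i, inner ℂ (Ψ (star (a i) * b) η) (ξ i)
      + ∑ j, inner ℂ (Ψ (star b * a j) (ξ j)) η + inner ℂ (Ψ (star b * b) η) η := by
  simp only [cpSum, Fin.sum_univ_castSucc, Fin.snoc_castSucc, Fin.snoc_last,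
    Finset.sum_add_distrib]
  ring

variable [CompleteSpace H]

lemma cpSum_starAlgHom_eq_zero (Φ : A →⋆ₐ[ℂ] (H →L[ℂ] H)) (x : A) (ξ : H) :
    cpSum Φ.toAlgHom.toLinearMap ![x, 1] ![ξ, -Φ x ξ] = 0 := by
  simp only [cpSum, Fin.sum_univ_two, Matrix.cons_val_zero, Matrix.cons_val_one,
    AlgHom.toLinearMap_apply, StarAlgHom.coe_toAlgHom, map_mul, map_star, map_one, map_neg,
    inner_neg_left, inner_neg_right, mul_apply_eq_comp, one_apply_eq_self,
    ContinuousLinearMap.star_eq_adjoint, ContinuousLinearMap.adjoint_inner_left]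
  ring

namespace IsCompletelyPositive

variable {Ψ : A →ₗ[ℂ] (H →L[ℂ] H)}

lemma cpSum_nonneg (hΨ : IsCompletelyPositive Ψ) {k : ℕ} (a : Fin k → A) (ξ : Fin k → H) :
    0 ≤ cpSum Ψ a ξ :=
  hΨ k a ξ

lemma apply_star_mul_self_nonneg (hΨ : IsCompletelyPositive Ψ) (a : A) :
    0 ≤ Ψ (star a * a) :=
  ContinuousLinearMap.nonneg_of_forall_inner_nonneg fun ξ => by
    simpa [cpSum] using hΨ.cpSum_nonneg ![a] ![ξ]

lemma cpSum_eq_zero_of_sub {Φ : A →ₗ[ℂ] (H →L[ℂ] H)} (hΨ : IsCompletelyPositive Ψ)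
    (hΦΨ : IsCompletelyPositive (Φ - Ψ)) {k : ℕ} {a : Fin k → A} {ξ : Fin k → H}
    (hΦ : cpSum Φ a ξ = 0) : cpSum Ψ a ξ = 0 := by
  have := hΦΨ.cpSum_nonneg a ξ
  rw [cpSum_sub, hΦ, zero_sub, neg_nonneg] at this
  exact le_antisymm this (hΨ.cpSum_nonneg a ξ)

/-- Cauchy–Schwarz for the form `cpSum Ψ`: a null vector is orthogonal to everything. -/
lemma sum_inner_eq_zero_of_cpSum_eq_zero (hΨ : IsCompletelyPositive Ψ) {k : ℕ}
    {a : Fin k → A} {ξ : Fin k → H} (h : cpSum Ψ a ξ = 0) (b : A) (η : H) :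
    ∑ i, inner ℂ (Ψ (star (a i) * b) η) (ξ i) = 0 ∧
      ∑ j, inner ℂ (Ψ (star b * a j) (ξ j)) η = 0 := by
  refine Complex.eq_zero_of_forall_nonneg (D := inner ℂ (Ψ (star b * b) η) η) fun t => ?_
  have := hΨ.cpSum_nonneg (Fin.snoc a b) (Fin.snoc ξ (t • η))
  rw [cpSum_snoc, h, zero_add] at this
  convert this using 1
  simp only [map_smul, inner_smul_left, inner_smul_right, Finset.mul_sum]
  ring

variable {Φ : A →⋆ₐ[ℂ] (H →L[ℂ] H)}

lemma inner_apply_eq_of_sub (hΨ : IsCompletelyPositive Ψ)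
    (hΦΨ : IsCompletelyPositive (Φ.toAlgHom.toLinearMap - Ψ)) (x : A) (ξ η : H) :
    inner ℂ (Ψ (star x) η) ξ = inner ℂ (Ψ 1 η) (Φ x ξ) ∧
      inner ℂ (Ψ x ξ) η = inner ℂ (Ψ 1 (Φ x ξ)) η := by
  have hnull := hΨ.cpSum_eq_zero_of_sub hΦΨ (cpSum_starAlgHom_eq_zero Φ x ξ)
  simpa only [Fin.sum_univ_two, Matrix.cons_val_zero, Matrix.cons_val_one, star_one, mul_one,
    one_mul, map_neg, inner_neg_left, inner_neg_right, ← sub_eq_add_neg, sub_eq_zero]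
    using hΨ.sum_inner_eq_zero_of_cpSum_eq_zero hnull 1 η

lemma apply_eq_apply_one_mul (hΨ : IsCompletelyPositive Ψ)
    (hΦΨ : IsCompletelyPositive (Φ.toAlgHom.toLinearMap - Ψ)) (x : A) :
    Ψ x = Ψ 1 * Φ x := by
  ext ξ
  exact ext_inner_right ℂ fun η => (hΨ.inner_apply_eq_of_sub hΦΨ x ξ η).2

lemma apply_eq_mul_apply_one (hΨ : IsCompletelyPositive Ψ)
    (hΦΨ : IsCompletelyPositive (Φ.toAlgHom.toLinearMap - Ψ)) (x : A) :
    Ψ x = Φ x * Ψ 1 := by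
  ext η
  refine ext_inner_right ℂ fun ξ => ?_
  have h := (hΨ.inner_apply_eq_of_sub hΦΨ (star x) ξ η).1
  rw [star_star] at h
  rw [h, mul_apply_eq_comp, map_star, ContinuousLinearMap.star_eq_adjoint,
    ContinuousLinearMap.adjoint_inner_right]

end IsCompletelyPositive

end

theorem stmt0_general
    {A : Type*} [NormedRing A] [StarRing A]
    [NormedAlgebra ℂ A]
    {H : Type*} [NormedAddCommGroup H] [InnerProductSpace ℂ H] [CompleteSpace H]
    (Φ : A →⋆ₐ[ℂ] (H →L[ℂ] H)) (Ψ : A →ₗ[ℂ] (H →L[ℂ] H))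
    (hΨ : IsCompletelyPositive Ψ)
    (hdiff : IsCompletelyPositive (Φ.toAlgHom.toLinearMap - Ψ)) :
    ∃! z : H →L[ℂ] H,
      (∀ x : A, z * Φ x = Φ x * z) ∧ 0 ≤ z ∧ z ≤ 1 ∧ ∀ x : A, Ψ x = z * Φ x := by
  have hleft := hΨ.apply_eq_apply_one_mul hdiff
  have hright := hΨ.apply_eq_mul_apply_one hdiff
  refine ⟨Ψ 1, ⟨fun x => (hleft x).symm.trans (hright x), ?_, ?_, hleft⟩, ?_⟩
  · simpa using hΨ.apply_star_mul_self_nonneg 1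
  · simpa using hdiff.apply_star_mul_self_nonneg 1
  · rintro z ⟨-, -, -, hz⟩
    simpa using (hz 1).symm

theorem stmt0
    {A : Type*} [NormedRing A] [StarRing A] [CStarRing A] [CompleteSpace A]
    [NormedAlgebra ℂ A] [StarModule ℂ A]
    {H : Type*} [NormedAddCommGroup H] [InnerProductSpace ℂ H] [CompleteSpace H]
    (Φ : A →⋆ₐ[ℂ] (H →L[ℂ] H)) (Ψ : A →ₗ[ℂ] (H →L[ℂ] H))
    (hΨ : IsCompletelyPositive Ψ)
    (hdiff : IsCompletelyPositive (Φ.toAlgHom.toLinearMap - Ψ)) :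
    ∃! z : H →L[ℂ] H,
      (∀ x : A, z * Φ x = Φ x * z) ∧ 0 ≤ z ∧ z ≤ 1 ∧ ∀ x : A, Ψ x = z * Φ x :=
  stmt0_general Φ Ψ hΨ hdiff
end

section
/- There do not exist positive real numbers λ₁, …, λₙ such that Sᵢ x Sᵢ* = λᵢ · Σⱼ Sⱼ x Sⱼ* for all x in the Cuntz algebra Oₙ and all i. Consequently, the canonical endomorphism Φₙ is not a numerical operational extreme point. -/
theorem stmt7
    {A : Type*} [NormedRing A] [StarRing A] [CStarRing A] [CompleteSpace A]
    [NormedAlgebra ℂ A] [StarModule ℂ A] [Nontrivial A]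
    (n : ℕ) (hn : 2 ≤ n) (S : Fin n → A)
    (horth : ∀ i j, star (S i) * S j = if i = j then 1 else 0)
    (hsum : ∑ i, S i * star (S i) = 1) :
    -- Φₙ is not a numerical operational extreme point:
    ¬ ∃ lam : Fin n → ℝ, (∀ i, 0 < lam i) ∧
        ∀ (i : Fin n) (x : A),
          S i * x * star (S i) = (lam i : ℂ) • ∑ j, S j * x * star (S j) := by
  rintro ⟨lam, hpos, heq⟩
  have hself : ∀ i, star (S i) * S i = 1 := by
    intro i
    simpa using horth i i
  -- From x = 1 : S i * star (S i) = lam i • 1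
  have h1 : ∀ i, S i * star (S i) = (lam i : ℂ) • (1 : A) := by
    intro i
    have := heq i 1
    simpa [mul_one, hsum] using this
  -- Multiply on both sides to get lam i = 1
  have hlam1 : ∀ i, (lam i : ℂ) = 1 := by
    intro i
    have h2 : star (S i) * (S i * star (S i)) * S i = (lam i : ℂ) • (1 : A) := by
      rw [h1 i]
      simp [mul_smul_comm, smul_mul_assoc, hself i]
    have h3 : star (S i) * (S i * star (S i)) * S i = 1 := by
      have : star (S i) * (S i * star (S i)) * S i
          = (star (S i) * S i) * (star (S i) * S i) := by
            simp only [mul_assoc]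
      rw [this, hself i, one_mul]
    have h4 : ((lam i : ℂ) - 1) • (1 : A) = 0 := by
      rw [sub_smul, one_smul, ← h2, h3, sub_self]
    rcases smul_eq_zero.mp h4 with h | h
    · exact sub_eq_zero.mp h
    · exact absurd h one_ne_zero
  -- hence S i * star (S i) = 1 for all i
  have hproj : ∀ i, S i * star (S i) = 1 := by
    intro i; rw [h1 i, hlam1 i, one_smul]
  -- now derive contradiction using two distinct indices
  have h01 : (⟨0, by omega⟩ : Fin n) ≠ ⟨1, by omega⟩ := by
    simp [Fin.ext_iff]
  have hz : star (S ⟨0, by omega⟩) * S ⟨1, by omega⟩ = 0 := by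
    rw [horth, if_neg h01]
  have hS1 : S (⟨1, by omega⟩ : Fin n) = 0 := by
    calc S (⟨1, by omega⟩ : Fin n)
        = (S ⟨0, by omega⟩ * star (S ⟨0, by omega⟩)) * S ⟨1, by omega⟩ := by
          rw [hproj, one_mul]
      _ = S ⟨0, by omega⟩ * (star (S ⟨0, by omega⟩) * S ⟨1, by omega⟩) := by rw [mul_assoc]
      _ = 0 := by rw [hz, mul_zero]
  have : (1 : A) = 0 := by
    rw [← hself ⟨1, by omega⟩, hS1, mul_zero]
  exact one_ne_zero this
end

section
/- Suppose a unital map Φ on the Cuntz algebra Oₙ can be written as Φ = Σᵢ Ad Sᵢ ∘ Ad S₁* (so Φ(x) = Σᵢ SᵢS₁* x S₁Sᵢ*), and suppose there exist scalars λᵢ with 0 < λᵢ < 1, Σᵢ λᵢ = 1, and Ad(SᵢS₁*) = λᵢ·Φ as maps. Then evaluating at x = 1 forces SᵢSᵢ* = λᵢ·1 for each i, which is impossible; hence Φ is not a numerical operational extreme point of the UCP maps on Oₙ. -/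
theorem stmt16
    {A : Type*} [NormedRing A] [StarRing A] [CStarRing A] [CompleteSpace A]
    [NormedAlgebra ℂ A] [StarModule ℂ A] [Nontrivial A]
    (n : ℕ) (hn : 2 ≤ n) (S : Fin n → A)
    (horth : ∀ i j, star (S i) * S j = if i = j then 1 else 0)
    (hsum : ∑ i, S i * star (S i) = 1) :
    -- Φ = ∑ᵢ Ad Sᵢ ∘ Ad S₁* is not a numerical operational extreme point
    let i₁ : Fin n := ⟨0, by omega⟩
    let Φ : A → A := fun x => ∑ i, S i * star (S i₁) * x * S i₁ * star (S i)
    ¬ ∃ lam : Fin n → ℝ, (∀ i, 0 < lam i ∧ lam i < 1) ∧ (∑ i, lam i = 1) ∧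
        ∀ (i : Fin n) (x : A),
          (S i * star (S i₁)) * x * star (S i * star (S i₁)) = (lam i : ℂ) • Φ x := by
  intro i₁ Φ
  rintro ⟨lam, hpos, hsum1, hx⟩
  have hii : star (S i₁) * S i₁ = 1 := by simpa using horth i₁ i₁
  have hΦ1 : Φ 1 = 1 := by
    show (∑ i, S i * star (S i₁) * 1 * S i₁ * star (S i)) = 1
    have : (∑ i, S i * star (S i₁) * 1 * S i₁ * star (S i)) = ∑ i, S i * star (S i) := by
      refine Finset.sum_congr rfl fun i _ => ?_
      rw [mul_one, mul_assoc (S i), hii, mul_one]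
    rw [this, hsum]
  -- evaluate hx at x = 1
  have h1 : ∀ i, S i * star (S i) = (lam i : ℂ) • 1 := by
    intro i
    have h := hx i 1
    rw [hΦ1, star_mul, star_star, mul_one] at h
    rwa [← mul_assoc, mul_assoc (S i), hii, mul_one] at h
  -- projection equation forces lam i ∈ {0,1}
  have key : ∀ i, lam i * lam i = lam i := by
    intro i
    have hi : star (S i) * S i = 1 := by simpa using horth i i
    have hp : (S i * star (S i)) * (S i * star (S i)) = S i * star (S i) := by
      rw [mul_assoc, ← mul_assoc (star (S i)), hi, one_mul]
    rw [h1 i, smul_mul_smul_comm, one_mul] at hp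
    have halg : algebraMap ℂ A ((lam i : ℂ) * (lam i : ℂ)) = algebraMap ℂ A (lam i : ℂ) := by
      rw [Algebra.algebraMap_eq_smul_one, Algebra.algebraMap_eq_smul_one]
      exact hp
    have hc : (lam i : ℂ) * (lam i : ℂ) = (lam i : ℂ) :=
      (algebraMap ℂ A).injective halg
    exact_mod_cast hc
  have h0 := hpos i₁
  have hk := key i₁
  nlinarith [h0.1, h0.2, hk]
end
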